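/- Let F be the free group on three generators α, β, γ, let Ψ : F → F be the group endomorphism determined by Ψ(α)=γαβ, Ψ(β)=γβα⁻¹γαβ, Ψ(γ)=γαβα⁻¹γβ, and let C₂ be a group with exactly two elements. Then for each generator x ∈ {α, β, γ} there exists a group homomorphism f : F → C₂ such that f(Ψⁿ(x)) ≠ f(x) for every n ≥ 1. -/

import Mathlib

/-!
Write `C₂ = {1, g}` and let `χᵢ : F → C₂` send the `i`-th generator to `g` and the other two
to `1`. Such a map only sees exponent sums modulo 2, and modulo 2 the word `Ψ(α)` contains each
generator once while `Ψ(β)` and `Ψ(γ)` contain none. Hence `χᵢ ∘ Ψ = χ_α` for every `i`, so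
`χᵢ(Ψⁿ x) = χ_α(x)` for `n ≥ 1`. Taking `f = χ_β` for `x = α` and `f = χ_x` otherwise gives
`f(Ψⁿ x) ≠ f(x)`.
-/

namespace Stmt15

/-- The generator α of the free group on three generators. -/
def α : FreeGroup (Fin 3) := FreeGroup.of 0
/-- The generator β of the free group on three generators. -/
def β : FreeGroup (Fin 3) := FreeGroup.of 1
/-- The generator γ of the free group on three generators. -/
def γ : FreeGroup (Fin 3) := FreeGroup.of 2

/-- The endomorphism Ψ of the free group on α, β, γ determined by
Ψ(α)=γαβ, Ψ(β)=γβα⁻¹γαβ, Ψ(γ)=γαβα⁻¹γβ. -/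
def Ψ : FreeGroup (Fin 3) →* FreeGroup (Fin 3) :=
  FreeGroup.lift ![γ * α * β, γ * β * α⁻¹ * γ * α * β, γ * α * β * α⁻¹ * γ * β]

theorem _root_.MonoidHom.apply_iterate_of_comp_eq {M N : Type*} [MulOneClass M] [MulOneClass N]
    {φ : M →* M} {f : M →* N} (h : f.comp φ = f) (n : ℕ) (x : M) : f (φ^[n] x) = f x := by
  have hsemiconj : Function.Semiconj f φ id := fun y => DFunLike.congr_fun h y
  simpa using hsemiconj.iterate_right n x

theorem exists_ne_one_mul_self_eq_one_of_card_eq_two {G : Type*} [Group G]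
    (hcard : Nat.card G = 2) : ∃ g : G, g ≠ 1 ∧ g * g = 1 := by
  have : Finite G := Nat.finite_of_card_ne_zero (by omega)
  have : Nontrivial G := Finite.one_lt_card_iff_nontrivial.mp (by omega)
  obtain ⟨g, hg⟩ := exists_ne (1 : G)
  refine ⟨g, hg, ?_⟩
  rw [← pow_two, ← hcard, pow_card_eq_one']

section LiftSingle

variable {G : Type*} [Group G] {g : G}

def liftSingle (g : G) (i : Fin 3) : FreeGroup (Fin 3) →* G :=
  FreeGroup.lift (Pi.mulSingle i g)

theorem liftSingle_of (g : G) (i j : Fin 3) :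
    liftSingle g i (FreeGroup.of j) = (Pi.mulSingle i g : Fin 3 → G) j :=
  FreeGroup.lift_apply_of

theorem liftSingle_comp_Ψ (hg : g * g = 1) (i : Fin 3) :
    (liftSingle g i).comp Ψ = liftSingle g 0 := by
  refine FreeGroup.ext_hom _ _ fun j => ?_
  fin_cases i <;> fin_cases j <;> simp [liftSingle, Ψ, α, β, γ, hg]

theorem liftSingle_apply_Ψ_iterate (hg : g * g = 1) (i : Fin 3) {n : ℕ} (hn : 1 ≤ n)
    (x : FreeGroup (Fin 3)) : liftSingle g i ((⇑Ψ)^[n] x) = liftSingle g 0 x := by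
  obtain ⟨m, rfl⟩ := Nat.exists_eq_add_of_le' hn
  rw [Function.iterate_succ_apply', ← MonoidHom.comp_apply, liftSingle_comp_Ψ hg,
    MonoidHom.apply_iterate_of_comp_eq (liftSingle_comp_Ψ hg 0)]

theorem exists_hom_apply_Ψ_iterate_ne (hg1 : g ≠ 1) (hg : g * g = 1) (i : Fin 3) :
    ∃ f : FreeGroup (Fin 3) →* G,
      ∀ n, 1 ≤ n → f ((⇑Ψ)^[n] (FreeGroup.of i)) ≠ f (FreeGroup.of i) := by
  by_cases hi : i = 0
  · subst hi
    refine ⟨liftSingle g 1, fun n hn => ?_⟩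
    simpa [liftSingle_apply_Ψ_iterate hg 1 hn, liftSingle_of] using hg1
  · refine ⟨liftSingle g i, fun n hn => ?_⟩
    simpa [liftSingle_apply_Ψ_iterate hg i hn, liftSingle_of, Pi.mulSingle_apply, hi]
      using hg1.symm

end LiftSingle

/-- for a two-element group `C₂`, for each generator `x ∈ {α, β, γ}` there is a
homomorphism `f` from the free group on α, β, γ to `C₂` with `f(Ψⁿ(x)) ≠ f(x)` for all `n ≥ 1`. -/
theorem stmt15 {C₂ : Type*} [Group C₂] (hcard : Nat.card C₂ = 2) :
    ∀ x ∈ ({α, β, γ} : Set (FreeGroup (Fin 3))),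
      ∃ f : FreeGroup (Fin 3) →* C₂, ∀ n : ℕ, 1 ≤ n → f ((⇑Ψ)^[n] x) ≠ f x := by
  obtain ⟨g, hg1, hg⟩ := exists_ne_one_mul_self_eq_one_of_card_eq_two hcard
  rintro x (rfl | rfl | rfl)
  · exact exists_hom_apply_Ψ_iterate_ne hg1 hg 0
  · exact exists_hom_apply_Ψ_iterate_ne hg1 hg 1
  · exact exists_hom_apply_Ψ_iterate_ne hg1 hg 2

end Stmt15
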